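/- Let R be a supertropical semiring such that eR is a nontrivial semifield, and let (q,b) be a quadratic pair on an R-module V. Let x, y, w ∈ V be anisotropic with e·q(x+y) = e·(q(x)+q(y)). If moreover either (c1) q(x)·CS(y,w) = q(y)·CS(x,w), or (c2) CS(x,w) = CS(y,w), or (c3) e·q(x) = e·q(y), then CS(x+y, w) = CS(x,w) + CS(y,w). -/

import Mathlib

open scoped Classical

namespace Supertrop

section Defs

variable (R : Type*) [CommSemiring R]

/-- The distinguished element `e = 1 + 1` of a semiring. -/
def eps : R := 1 + 1

/-- `R` is a supertropical semiring: `e` is additively idempotent, and the two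
supertropical addition axioms hold. -/
def IsSupertropical : Prop :=
  eps R + eps R = eps R ∧
    (∀ x y : R, eps R * x ≠ eps R * y → x + y = x ∨ x + y = y) ∧
    (∀ x y : R, eps R * x = eps R * y → x + y = eps R * y)

/-- The ghost ideal `eR`, as a subset of `R`. -/
def eSet : Set R := Set.range (fun a : R => eps R * a)

/-- The tangible elements `𝒯(R) = R \ eR`. -/
def tangible : Set R := {x : R | x ∉ eSet R}

/-- The nonzero ghost elements `𝒢(R) = eR \ {0}`. -/
def ghost : Set R := eSet R \ {0}

end Defs

section Orders

variable {R : Type*} [CommSemiring R]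

/-- The minimal ordering on an additive monoid: `x ≤ y` iff `∃ z, x + z = y`. -/
def mle {M : Type*} [AddCommMonoid M] (x y : M) : Prop := ∃ z, x + z = y

/-- Strict minimal ordering. -/
def mlt {M : Type*} [AddCommMonoid M] (x y : M) : Prop := mle x y ∧ x ≠ y

/-- The (total) ordering of the bipotent semiring `eR`: `u ≤ v ⟺ u + v = v`. -/
def gle (u v : R) : Prop := u + v = v

/-- The strict ordering of `eR`. -/
def glt (u v : R) : Prop := gle u v ∧ u ≠ v

end Orders

section SSF

variable (R : Type*) [CommSemiring R]

/-- `R` is a supersemifield: supertropical, every tangible element is invertible in `R`,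
and `𝒢(R)` is a group under multiplication with identity `e`. -/
def IsSupersemifield : Prop :=
  IsSupertropical R ∧
    (∀ t ∈ tangible R, IsUnit t) ∧
    eps R ∈ ghost R ∧
    (∀ g ∈ ghost R, ∀ h ∈ ghost R, g * h ∈ ghost R) ∧
    (∀ g ∈ ghost R, ∃ h ∈ ghost R, g * h = eps R)

/-- The supersemifield `R` is tangible: `e·𝒯(R) = 𝒢(R)`. -/
def TangibleSSF : Prop := (fun t => eps R * t) '' tangible R = ghost R

/-- Nontriviality: `𝒢(R) ≠ {e}`. -/
def NontrivialG : Prop := ghost R ≠ {eps R}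

/-- `R` is discrete: `𝒢(R)` has a smallest element `> e`. -/
def DiscreteR : Prop :=
  ∃ c ∈ ghost R, glt (eps R) c ∧ ∀ d ∈ ghost R, glt (eps R) d → gle c d

/-- `R` is dense: `𝒢(R)` has no smallest element `> e`. -/
def DenseR : Prop := ¬ DiscreteR R

/-- `eR` is a semifield: `e ≠ 0`, `𝒢(R)` is closed under multiplication, and every
element of `𝒢(R)` is invertible in `eR` with respect to the identity `e`. -/
def GhostSemifield : Prop :=
  eps R ∈ ghost R ∧
    (∀ g ∈ ghost R, ∀ h ∈ ghost R, g * h ∈ ghost R) ∧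
    (∀ g ∈ ghost R, ∃ h ∈ ghost R, g * h = eps R)

end SSF

section Quad

variable {R : Type*} [CommSemiring R] {V : Type*} [AddCommMonoid V] [Module R V]

/-- `b` is a (symmetric bilinear) companion of the quadratic form `q`. -/
def IsCompanion (q : V → R) (b : V → V → R) : Prop :=
  (∀ x y, b x y = b y x) ∧
    (∀ x y z, b (x + y) z = b x z + b y z) ∧
    (∀ (a : R) (x y : V), b (a • x) y = a * b x y) ∧
    (∀ x y, q (x + y) = q x + q y + b x y)

/-- `(q, b)` is a quadratic pair on `V`. -/
def IsQuadPair (q : V → R) (b : V → V → R) : Prop :=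
  (∀ (a : R) (x : V), q (a • x) = a ^ 2 * q x) ∧ IsCompanion q b

/-- `q` is a quadratic form on `V`. -/
def IsQuadForm (q : V → R) : Prop := ∃ b, IsQuadPair q b

/-- `q` is quasilinear (i.e. additive) on the submodule `W`. -/
def QuasilinearOn (q : V → R) (W : Submodule R V) : Prop :=
  ∀ u ∈ W, ∀ v ∈ W, q (u + v) = q u + q v

/-- `x` is `q`-minimal: `q x' < q x` for every `x' < x` (in the minimal orderings). -/
def QMinimal (q : V → R) (x : V) : Prop := ∀ x' : V, mlt x' x → mlt (q x') (q x)

/-- The maximum of two elements of `R` with respect to the minimal ordering. -/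
noncomputable def rsup (a b : R) : R := if a = b then a else a + b

/-- The componentwise maximum `x ∨ y` (in the minimal ordering) of two vectors
of a free module. -/
noncomputable def vsup {ι : Type*} (bV : Module.Basis ι R V) (x y : V) : V :=
  bV.repr.symm (Finsupp.zipWith rsup (by simp [rsup]) (bV.repr x) (bV.repr y))

/-- The restriction `x(J)` of a vector to a subset `J` of the index set of the base. -/
noncomputable def restrict {ι : Type*} (bV : Module.Basis ι R V) (x : V) (J : Finset ι) : V :=
  ∑ i ∈ J, (bV.repr x) i • bV i

/-- The CS-ratio `CS(x,y) = e·b(x,y)² · (e·q(x)·q(y))⁻¹`, where `inv` is the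
inversion of the semifield `eR`. -/
noncomputable def CSratio (q : V → R) (b : V → V → R) (inv : R → R) (x y : V) : R :=
  eps R * (b x y) ^ 2 * inv (eps R * (q x * q y))

end Quad

/-!
Write `u ≤ v` for `gle u v`. On `eR` this is a total order, compatible with multiplication
(by distributivity), and reflected by multiplication with a nonzero ghost since those are
invertible in `eR`. Hence `e·αβ ≤ e·α² + e·β²`, because its square `e·α²·e·β²` is, and the
cross term of `e·(α + β)²` is absorbed: `e·(α + β)² = e·α² + e·β²`. With `s = CS(x,w)`,
`t = CS(y,w)`, `P = e·q(x)·q(w)` and `Q = e·q(y)·q(w)` the claim becomes the mediant identity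
`(sP + tQ)·(P + Q)⁻¹ = s + t` in `eR`. If `P = Q` (case (c3)) this is distributivity. Otherwise,
say `P ≤ Q`; each of (c1) (`Pt = Qs`) and (c2) gives `s ≤ t`, so `sP ≤ tQ`, and both sides
equal `t`.
-/

section Ghost

variable {R : Type*} [CommSemiring R]

lemma eps_mul_eps (hR : IsSupertropical R) : eps R * eps R = eps R :=
  calc eps R * eps R = eps R + eps R := by unfold eps; ring
    _ = eps R := hR.1

lemma add_self_eq_eps_mul (hR : IsSupertropical R) (a : R) : a + a = eps R * a :=
  hR.2.2 a a rfl

lemma eps_mul_eq_zero (hR : IsSupertropical R) {a : R} (h : eps R * a = 0) : a = 0 := by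
  simpa [h] using hR.2.2 a 0 (by rw [h, mul_zero])

lemma eps_mul_mem_eSet (a : R) : eps R * a ∈ eSet R := ⟨a, rfl⟩

lemma eps_mul_of_mem_eSet (hR : IsSupertropical R) {u : R} (hu : u ∈ eSet R) :
    eps R * u = u := by
  obtain ⟨a, rfl⟩ := hu
  rw [← mul_assoc, eps_mul_eps hR]

lemma mul_mem_eSet {u : R} (hu : u ∈ eSet R) (v : R) : u * v ∈ eSet R := by
  obtain ⟨a, rfl⟩ := hu
  exact ⟨a * v, (mul_assoc _ _ _).symm⟩

lemma add_mem_eSet {u v : R} (hu : u ∈ eSet R) (hv : v ∈ eSet R) : u + v ∈ eSet R := by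
  obtain ⟨a, rfl⟩ := hu
  obtain ⟨c, rfl⟩ := hv
  exact ⟨a + c, mul_add _ _ _⟩

lemma eps_mul_mem_ghost (hR : IsSupertropical R) {a : R} (ha : a ≠ 0) :
    eps R * a ∈ ghost R :=
  ⟨eps_mul_mem_eSet a, fun h => ha (eps_mul_eq_zero hR h)⟩

lemma gle.trans {u v w : R} (huv : gle u v) (hvw : gle v w) : gle u w := by
  unfold gle at *
  rw [← hvw, ← add_assoc, huv]

lemma gle.mul_right {u v : R} (h : gle u v) (w : R) : gle (u * w) (v * w) := by
  unfold gle at *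
  rw [← add_mul, h]

lemma gle.mul_left {u v : R} (h : gle u v) (w : R) : gle (w * u) (w * v) := by
  simpa only [mul_comm w] using h.mul_right w

lemma gle_zero (u : R) : gle 0 u := zero_add u

lemma gle_self (hR : IsSupertropical R) {u : R} (hu : u ∈ eSet R) : gle u u := by
  unfold gle
  rw [add_self_eq_eps_mul hR, eps_mul_of_mem_eSet hR hu]

lemma gle_add_right (hR : IsSupertropical R) {u : R} (hu : u ∈ eSet R) (v : R) :
    gle u (u + v) := by
  unfold gle
  rw [← add_assoc, gle_self hR hu]

lemma gle_total (hR : IsSupertropical R) (u : R) {v : R} (hv : v ∈ eSet R) :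
    gle u v ∨ gle v u := by
  by_cases h : eps R * u = eps R * v
  · left
    unfold gle
    rw [hR.2.2 u v h, eps_mul_of_mem_eSet hR hv]
  · rcases hR.2.1 u v h with h' | h'
    · right
      unfold gle
      rwa [add_comm]
    · exact Or.inl h'

section GhostSemifield

variable (hR : IsSupertropical R) (hsf : GhostSemifield R)
include hR hsf

lemma mul_right_cancel_of_mem_ghost {g u v : R} (hg : g ∈ ghost R) (hu : u ∈ eSet R)
    (hv : v ∈ eSet R) (h : u * g = v * g) : u = v := by
  obtain ⟨g', -, hgg'⟩ := hsf.2.2 g hg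
  calc u = u * (g * g') := by rw [hgg', mul_comm, eps_mul_of_mem_eSet hR hu]
    _ = v * (g * g') := by rw [← mul_assoc, h, mul_assoc]
    _ = v := by rw [hgg', mul_comm, eps_mul_of_mem_eSet hR hv]

lemma gle_of_mul_gle_mul_right {g u v : R} (hg : g ∈ ghost R) (hu : u ∈ eSet R)
    (hv : v ∈ eSet R) (h : gle (u * g) (v * g)) : gle u v := by
  refine mul_right_cancel_of_mem_ghost hR hsf hg (add_mem_eSet hu hv) hv ?_
  rwa [add_mul]

lemma gle_of_mul_self_gle_mul_self {u v : R} (hu : u ∈ eSet R) (hv : v ∈ eSet R)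
    (h : gle (u * u) (v * v)) : gle u v := by
  rcases gle_total hR u hv with huv | hvu
  · exact huv
  by_cases hu0 : u = 0
  · rw [hu0]; exact gle_zero v
  exact gle_of_mul_gle_mul_right hR hsf ⟨hu, hu0⟩ hu hv (h.trans (hvu.mul_left v))

lemma gle_of_mul_eq_mul {P Q s t : R} (hP : P ∈ ghost R) (hs : s ∈ eSet R)
    (ht : t ∈ eSet R) (hPQ : gle P Q) (h : P * t = Q * s) : gle s t := by
  refine gle_of_mul_gle_mul_right hR hsf hP hs ht ?_
  rw [mul_comm s, mul_comm t, h]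
  exact hPQ.mul_right s

lemma gle_add_of_mul_self_eq {a c m : R} (ha : a ∈ eSet R) (hc : c ∈ eSet R)
    (hm : m ∈ eSet R) (h : m * m = a * c) : gle m (a + c) := by
  have hac := add_mem_eSet ha hc
  refine gle_of_mul_self_gle_mul_self hR hsf hm hac ?_
  have hca : gle c (a + c) := by
    rw [add_comm]; exact gle_add_right hR hc a
  rw [h]
  exact ((gle_add_right hR ha c).mul_right c).trans (hca.mul_left _)

lemma eps_mul_add_sq (α β : R) :
    eps R * (α + β) ^ 2 = eps R * α ^ 2 + eps R * β ^ 2 := by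
  have hexpand : eps R * (α + β) ^ 2 =
      eps R * α ^ 2 + eps R * β ^ 2 + eps R * (α * β) :=
    calc eps R * (α + β) ^ 2 = eps R * α ^ 2 + eps R * β ^ 2 + eps R * (α * β + α * β) := by
          ring
      _ = eps R * α ^ 2 + eps R * β ^ 2 + eps R * (α * β) := by
          rw [add_self_eq_eps_mul hR, ← mul_assoc, eps_mul_eps hR]
  have hsq : eps R * (α * β) * (eps R * (α * β)) = eps R * α ^ 2 * (eps R * β ^ 2) := by
    ring
  rw [hexpand, add_comm _ (eps R * (α * β))]
  exact gle_add_of_mul_self_eq hR hsf (eps_mul_mem_eSet _) (eps_mul_mem_eSet _)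
    (eps_mul_mem_eSet _) hsq

lemma eps_mul_mul_mem_ghost {a c : R} (ha : a ≠ 0) (hc : c ≠ 0) :
    eps R * (a * c) ∈ ghost R := by
  have h := hsf.2.1 _ (eps_mul_mem_ghost hR ha) _ (eps_mul_mem_ghost hR hc)
  rwa [mul_mul_mul_comm, eps_mul_eps hR] at h

end GhostSemifield

section Mediant

variable (hR : IsSupertropical R) (hsf : GhostSemifield R) (inv : R → R)
  (hinv : ∀ g ∈ ghost R, inv g ∈ ghost R ∧ g * inv g = eps R)
include hR hinv

lemma mul_mul_inv_cancel {g u : R} (hg : g ∈ ghost R) (hu : u ∈ eSet R) :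
    u * g * inv g = u := by
  rw [mul_assoc, (hinv g hg).2, mul_comm, eps_mul_of_mem_eSet hR hu]

lemma mul_inv_mul_cancel {g u : R} (hg : g ∈ ghost R) (hu : u ∈ eSet R) :
    u * inv g * g = u := by
  rw [mul_right_comm, mul_mul_inv_cancel hR inv hinv hg hu]

lemma mediant_eq_add_of_gle {P Q s t : R} (hQ : Q ∈ ghost R) (ht : t ∈ eSet R)
    (hPQ : gle P Q) (hst : gle s t) : (s * P + t * Q) * inv (P + Q) = s + t := by
  have hmax : s * P + t * Q = t * Q := (hst.mul_right P).trans (hPQ.mul_left t)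
  rw [hmax, show P + Q = Q from hPQ, show s + t = t from hst,
    mul_mul_inv_cancel hR inv hinv hQ ht]

include hsf in
lemma mediant_eq_add_of_mul_eq_mul {P Q s t : R} (hP : P ∈ ghost R) (hQ : Q ∈ ghost R)
    (hs : s ∈ eSet R) (ht : t ∈ eSet R) (h : P * t = Q * s ∨ s = t) :
    (s * P + t * Q) * inv (P + Q) = s + t := by
  rcases gle_total hR P hQ.1 with hPQ | hQP
  · refine mediant_eq_add_of_gle hR inv hinv hQ ht hPQ ?_
    rcases h with h | rfl
    · exact gle_of_mul_eq_mul hR hsf hP hs ht hPQ h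
    · exact gle_self hR hs
  · rw [add_comm (s * P), add_comm P, add_comm s]
    refine mediant_eq_add_of_gle hR inv hinv hP hs hQP ?_
    rcases h with h | rfl
    · exact gle_of_mul_eq_mul hR hsf hQ ht hs hQP h.symm
    · exact gle_self hR hs

lemma mediant_self_eq_add {P s t : R} (hP : P ∈ ghost R) (hs : s ∈ eSet R)
    (ht : t ∈ eSet R) : (s * P + t * P) * inv (P + P) = s + t := by
  rw [add_self_eq_eps_mul hR, eps_mul_of_mem_eSet hR hP.1, ← add_mul,
    mul_mul_inv_cancel hR inv hinv hP (add_mem_eSet hs ht)]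

end Mediant

end Ghost

theorem stmt9_general {R : Type*} [CommSemiring R] (hR : IsSupertropical R)
    (hsf : GhostSemifield R)
    (inv : R → R) (hinv : ∀ g ∈ ghost R, inv g ∈ ghost R ∧ g * inv g = eps R)
    {V : Type*} [AddCommMonoid V] [Module R V] (q : V → R) (b : V → V → R)
    (hqb : IsQuadPair q b) (x y w : V)
    (hx : q x ≠ 0) (hy : q y ≠ 0) (hw : q w ≠ 0)
    (heq : eps R * q (x + y) = eps R * (q x + q y))
    (hcase : q x * CSratio q b inv y w = q y * CSratio q b inv x w ∨
      CSratio q b inv x w = CSratio q b inv y w ∨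
      eps R * q x = eps R * q y) :
    CSratio q b inv (x + y) w = CSratio q b inv x w + CSratio q b inv y w := by
  set s := CSratio q b inv x w
  set t := CSratio q b inv y w
  set P := eps R * (q x * q w)
  set Q := eps R * (q y * q w)
  have hP : P ∈ ghost R := eps_mul_mul_mem_ghost hR hsf hx hw
  have hQ : Q ∈ ghost R := eps_mul_mul_mem_ghost hR hsf hy hw
  have hs : s ∈ eSet R := mul_mem_eSet (eps_mul_mem_eSet _) _
  have ht : t ∈ eSet R := mul_mem_eSet (eps_mul_mem_eSet _) _
  have hsP : eps R * b x w ^ 2 = s * P :=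
    (mul_inv_mul_cancel hR inv hinv hP (eps_mul_mem_eSet _)).symm
  have htQ : eps R * b y w ^ 2 = t * Q :=
    (mul_inv_mul_cancel hR inv hinv hQ (eps_mul_mem_eSet _)).symm
  have hsum : eps R * (q (x + y) * q w) = P + Q := by
    rw [← mul_assoc, heq]; ring
  rw [CSratio, hqb.2.2.1, eps_mul_add_sq hR hsf, hsP, htQ, hsum]
  rcases hcase with hc | hc | hc
  · refine mediant_eq_add_of_mul_eq_mul hR hsf inv hinv hP hQ hs ht (Or.inl ?_)
    calc P * t = eps R * q w * (q x * t) := by ring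
      _ = Q * s := by rw [hc]; ring
  · exact mediant_eq_add_of_mul_eq_mul hR hsf inv hinv hP hQ hs ht (Or.inr hc)
  · have hPQ : P = Q := by simp only [P, Q, ← mul_assoc, hc]
    rw [hPQ]
    exact mediant_self_eq_add hR inv hinv hQ hs ht

/-- additivity of the CS-ratio when `q(x+y) ≅ν q(x)+q(y)` and one of
the conditions (c1), (c2), (c3) holds. -/
theorem stmt9 {R : Type*} [CommSemiring R] (hR : IsSupertropical R)
    (hsf : GhostSemifield R) (hnt : NontrivialG R)
    (inv : R → R) (hinv : ∀ g ∈ ghost R, inv g ∈ ghost R ∧ g * inv g = eps R)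
    {V : Type*} [AddCommMonoid V] [Module R V] (q : V → R) (b : V → V → R)
    (hqb : IsQuadPair q b) (x y w : V)
    (hx : q x ≠ 0) (hy : q y ≠ 0) (hw : q w ≠ 0)
    (heq : eps R * q (x + y) = eps R * (q x + q y))
    (hcase : q x * CSratio q b inv y w = q y * CSratio q b inv x w ∨
      CSratio q b inv x w = CSratio q b inv y w ∨
      eps R * q x = eps R * q y) :
    CSratio q b inv (x + y) w = CSratio q b inv x w + CSratio q b inv y w :=
  stmt9_general hR hsf inv hinv q b hqb x y w hx hy hw heq hcase

end Supertrop
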